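/- arXiv:1610.03522 — 5 statements merged into one kernel-verified Lean document; each statement's English description precedes it below -/
import Mathlib

section
/- Let d ≥ 2 be an integer, π_1 ∈ ℝ, and set π_i = π_1·(d^i − 1)/(d − 1) for i ≥ 0. Let T : [0,∞) → (ℕ → ℝ) satisfy T_0(t) = 0 for all t ≥ 0 and, for each i ≥ 1, the function t ↦ T_i(t) is differentiable with T_i'(t) = d·T_{i-1}(t) − (d+1)·T_i(t) + T_{i+1}(t). Define Φ(t) = Σ_{i≥1} d^{-i/2}·|T_i(t) − π_i|, and assume Φ(0) < ∞ and that the series defining Φ converges locally uniformly on [0,∞). Then Φ(t) ≤ Φ(0)·e^{−(√d − 1)²·t} for all t ≥ 0; in particular Φ converges to zero exponentially fast. -/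
/-!
With `y_i = T_i − π_i` and `s = √d`, we have `y_0 = 0` and `y` solves the same linear system. For
small `h > 0`, `y_i + h y_i'` is a combination of `y_{i-1}, y_i, y_{i+1}` with nonnegative
coefficients, so the upper right Dini derivative of `|y_i|` is at most
`s² |y_{i-1}| − (s² + 1) |y_i| + |y_{i+1}|`. Summation by parts against the weights `s^{-i}` turns
this into `−(s − 1)²` times the truncated Lyapunov function plus a boundary term, which vanishes
uniformly on compacts as the truncation grows. Grönwall's inequality for the truncations then
passes to the limit.
-/

open Filter Set Topology

/-- The upper right Dini derivative `limsup_{z → x⁺} slope f x z` is at most `B`. -/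
def UpperRightDiniLE (f : ℝ → ℝ) (x B : ℝ) : Prop :=
  ∀ r, B < r → ∀ᶠ z in 𝓝[>] x, slope f x z < r

namespace UpperRightDiniLE

variable {f : ℝ → ℝ} {x B : ℝ}

theorem mono (h : UpperRightDiniLE f x B) {B' : ℝ} (hB : B ≤ B') : UpperRightDiniLE f x B' :=
  fun r hr => h r (hB.trans_lt hr)

theorem finset_sum_mul {ι : Type*} (s : Finset ι) {f : ι → ℝ → ℝ} {w B : ι → ℝ}
    (hw : ∀ i ∈ s, 0 ≤ w i) (h : ∀ i ∈ s, UpperRightDiniLE (f i) x (B i)) :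
    UpperRightDiniLE (fun z => ∑ i ∈ s, w i * f i z) x (∑ i ∈ s, w i * B i) := by
  intro r hr
  set W := ∑ i ∈ s, w i
  have hW : 0 ≤ W := Finset.sum_nonneg hw
  set δ := (r - ∑ i ∈ s, w i * B i) / (W + 1)
  have hδ : 0 < δ := div_pos (sub_pos.2 hr) (by linarith)
  have hδW : ∑ i ∈ s, w i * (B i + δ) < r := by
    have hδ_def : δ * (W + 1) = r - ∑ i ∈ s, w i * B i := div_mul_cancel₀ _ (by linarith)
    simp only [mul_add, Finset.sum_add_distrib, ← Finset.sum_mul]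
    nlinarith
  filter_upwards [(eventually_all_finset s).2 fun i hi => h i hi _ (lt_add_of_pos_right _ hδ)]
    with z hz
  calc slope (fun z => ∑ i ∈ s, w i * f i z) x z = ∑ i ∈ s, w i * slope (f i) x z := by
        simp only [slope_def_field, ← Finset.sum_sub_distrib, Finset.sum_div, ← mul_sub,
          mul_div_assoc]
    _ ≤ ∑ i ∈ s, w i * (B i + δ) :=
        Finset.sum_le_sum fun i hi => mul_le_mul_of_nonneg_left (hz i hi).le (hw i hi)
    _ < r := hδW

end UpperRightDiniLE

/-- For `0 ≤ c h ≤ 1`, `a + h f'` is the combination `(1 - c h) a + h (f' + c a)`. -/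
theorem HasDerivWithinAt.upperRightDiniLE_abs {f : ℝ → ℝ} {f' x : ℝ}
    (hf : HasDerivWithinAt f f' (Ici x) x) {c : ℝ} (hc : 0 ≤ c) :
    UpperRightDiniLE (fun z => |f z|) x (|f' + c * f x| - c * |f x|) := by
  intro r hr
  have hslope : Tendsto (slope f x) (𝓝[>] x) (𝓝 f') :=
    (hasDerivWithinAt_iff_tendsto_slope' self_notMem_Ioi).1 hf.Ioi_of_Ici
  have hclose : ∀ᶠ z in 𝓝[>] x, |slope f x z - f'| < r - (|f' + c * f x| - c * |f x|) := by
    simpa only [Real.dist_eq] using Metric.tendsto_nhds.1 hslope _ (sub_pos.2 hr)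
  have hc1 : 0 < c + 1 := by linarith
  filter_upwards [hclose, Ioo_mem_nhdsGT (lt_add_of_pos_right x (one_div_pos.2 hc1))]
    with z hz ⟨hxz, hz_lt⟩
  set h := z - x
  have hh : 0 < h := sub_pos.2 hxz
  have hch : 0 ≤ 1 - c * h := by
    have : (c + 1) * h < 1 := (lt_div_iff₀' hc1).1 (by linarith)
    nlinarith
  have hfz : f z = (1 - c * h) * f x + h * (f' + c * f x) + h * (slope f x z - f') := by
    have := sub_smul_slope f x z
    simp only [smul_eq_mul, vsub_eq_sub] at this
    linear_combination -this
  have habs : |f z| ≤ (1 - c * h) * |f x| + h * |f' + c * f x| + h * |slope f x z - f'| := by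
    rw [hfz]
    refine (abs_add_le _ _).trans (add_le_add ((abs_add_le _ _).trans (le_of_eq ?_)) (le_of_eq ?_))
    · rw [abs_mul, abs_mul, abs_of_nonneg hch, abs_of_pos hh]
    · rw [abs_mul, abs_of_pos hh]
  rw [slope_def_field, div_lt_iff₀ hh]
  nlinarith [mul_lt_mul_of_pos_left hz hh]

theorem sum_inv_pow_mul_recurrence {K : Type*} [Field K] {s : K} (hs : s ≠ 0) (a : ℕ → K)
    (N : ℕ) :
    ∑ i ∈ Finset.range N, (s ^ (i + 1))⁻¹ * (s ^ 2 * a i - (s ^ 2 + 1) * a (i + 1) + a (i + 2)) =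
      -(s - 1) ^ 2 * ∑ i ∈ Finset.range N, (s ^ (i + 1))⁻¹ * a (i + 1)
        + s * (s ^ (N + 1))⁻¹ * a (N + 1) - s ^ 2 * (s ^ (N + 1))⁻¹ * a N + s * a 0 - a 1 := by
  induction N with
  | zero => field_simp; ring
  | succ n ih =>
    rw [Finset.sum_range_succ, Finset.sum_range_succ, ih]
    field_simp
    ring

noncomputable def lyapunovSum (s : ℝ) (y : ℝ → ℕ → ℝ) (N : ℕ) (x : ℝ) : ℝ :=
  ∑ i ∈ Finset.range N, (s ^ (i + 1))⁻¹ * |y x (i + 1)|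

section Lyapunov

variable {s : ℝ} {y : ℝ → ℕ → ℝ}

theorem lyapunovSum_mono (hs : 0 ≤ s) (x : ℝ) : Monotone fun N => lyapunovSum s y N x :=
  fun _ _ hMN => Finset.sum_le_sum_of_subset_of_nonneg (Finset.range_mono hMN)
    fun _ _ _ => by positivity

theorem lyapunovSum_succ (N : ℕ) (x : ℝ) :
    lyapunovSum s y (N + 1) x = lyapunovSum s y N x + (s ^ (N + 1))⁻¹ * |y x (N + 1)| :=
  Finset.sum_range_succ _ N

theorem upperRightDiniLE_lyapunovSum (hs : 0 < s) (N : ℕ) {x : ℝ} (hy0 : y x 0 = 0)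
    (hy : ∀ i, HasDerivWithinAt (fun u => y u (i + 1))
      (s ^ 2 * y x i - (s ^ 2 + 1) * y x (i + 1) + y x (i + 2)) (Ici x) x) :
    UpperRightDiniLE (lyapunovSum s y N) x
      (-(s - 1) ^ 2 * lyapunovSum s y N x + s * (s ^ (N + 1))⁻¹ * |y x (N + 1)|) := by
  refine (UpperRightDiniLE.finset_sum_mul (Finset.range N) (w := fun i => (s ^ (i + 1))⁻¹)
    (fun i _ => by positivity)
    (fun i _ => (hy i).upperRightDiniLE_abs (c := s ^ 2 + 1) (by positivity))).mono ?_
  have hterm : ∀ i, |s ^ 2 * y x i - (s ^ 2 + 1) * y x (i + 1) + y x (i + 2)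
      + (s ^ 2 + 1) * y x (i + 1)| ≤ s ^ 2 * |y x i| + |y x (i + 2)| := fun i => by
    rw [show s ^ 2 * y x i - (s ^ 2 + 1) * y x (i + 1) + y x (i + 2) + (s ^ 2 + 1) * y x (i + 1)
      = s ^ 2 * y x i + y x (i + 2) by ring]
    exact (abs_add_le _ _).trans (by rw [abs_mul, abs_of_nonneg (sq_nonneg s)])
  calc _ ≤ ∑ i ∈ Finset.range N, (s ^ (i + 1))⁻¹ *
        (s ^ 2 * |y x i| - (s ^ 2 + 1) * |y x (i + 1)| + |y x (i + 2)|) :=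
        Finset.sum_le_sum fun i _ => mul_le_mul_of_nonneg_left (by linarith [hterm i])
          (by positivity)
    _ = -(s - 1) ^ 2 * lyapunovSum s y N x + s * (s ^ (N + 1))⁻¹ * |y x (N + 1)|
          - s ^ 2 * (s ^ (N + 1))⁻¹ * |y x N| - |y x 1| := by
        rw [sum_inv_pow_mul_recurrence hs.ne' (fun i => |y x i|), hy0, abs_zero, mul_zero,
          add_zero]
        rfl
    _ ≤ _ := by
        have : 0 ≤ s ^ 2 * (s ^ (N + 1))⁻¹ * |y x N| := by positivity
        linarith [abs_nonneg (y x 1)]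

theorem lyapunovSum_le_gronwallBound (hs : 0 < s) {t δ ε : ℝ} (ht : 0 ≤ t) (N : ℕ)
    (hy0 : ∀ x ∈ Icc 0 t, y x 0 = 0)
    (hy : ∀ i, ∀ x ∈ Icc 0 t, HasDerivWithinAt (fun u => y u (i + 1))
      (s ^ 2 * y x i - (s ^ 2 + 1) * y x (i + 1) + y x (i + 2)) (Icc 0 t) x)
    (hδ : lyapunovSum s y N 0 ≤ δ)
    (htail : ∀ x ∈ Icc 0 t, s * (s ^ (N + 1))⁻¹ * |y x (N + 1)| ≤ ε) :
    lyapunovSum s y N t ≤ gronwallBound δ (-(s - 1) ^ 2) ε t := by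
  have hcont : ContinuousOn (lyapunovSum s y N) (Icc 0 t) := by
    have : ∀ i, ContinuousOn (fun u => y u (i + 1)) (Icc 0 t) := fun i x hx =>
      (hy i x hx).continuousWithinAt
    unfold lyapunovSum
    fun_prop
  have hdini : ∀ x ∈ Ico 0 t, UpperRightDiniLE (lyapunovSum s y N) x
      (-(s - 1) ^ 2 * lyapunovSum s y N x + s * (s ^ (N + 1))⁻¹ * |y x (N + 1)|) :=
    fun x hx => upperRightDiniLE_lyapunovSum hs N (hy0 x (Ico_subset_Icc_self hx))
      fun i => (hy i x (Ico_subset_Icc_self hx)).mono_of_mem_nhdsWithin (Icc_mem_nhdsGE_of_mem hx)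
  simpa only [sub_zero] using le_gronwallBound_of_liminf_deriv_right_le hcont
    (fun x hx r hr => ((hdini x hx) r hr).frequently) hδ
    (fun x hx => by linarith [htail x (Ico_subset_Icc_self hx)]) t ⟨ht, le_rfl⟩

theorem le_mul_exp_of_tendstoUniformlyOn_lyapunovSum (hs : 0 < s) {t : ℝ} (ht : 0 ≤ t)
    {Φ : ℝ → ℝ} (hy0 : ∀ x ∈ Icc 0 t, y x 0 = 0)
    (hy : ∀ i, ∀ x ∈ Icc 0 t, HasDerivWithinAt (fun u => y u (i + 1))
      (s ^ 2 * y x i - (s ^ 2 + 1) * y x (i + 1) + y x (i + 2)) (Icc 0 t) x)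
    (hΦ : TendstoUniformlyOn (lyapunovSum s y) Φ atTop (Icc 0 t)) :
    Φ t ≤ Φ 0 * Real.exp (-(s - 1) ^ 2 * t) := by
  have hle : ∀ N, ∀ x ∈ Icc 0 t, lyapunovSum s y N x ≤ Φ x := fun N x hx =>
    (lyapunovSum_mono hs.le x).ge_of_tendsto (hΦ.tendsto_at hx) N
  have hε : ∀ ε > 0, Φ t ≤ gronwallBound (Φ 0) (-(s - 1) ^ 2) ε t := by
    intro ε hε
    have hclose : ∀ᶠ N in atTop, ∀ x ∈ Icc 0 t, Φ x - lyapunovSum s y N x < ε / s :=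
      (Metric.tendstoUniformlyOn_iff.1 hΦ _ (div_pos hε hs)).mono fun N hN x hx =>
        (le_abs_self _).trans_lt (hN x hx)
    refine le_of_tendsto (hΦ.tendsto_at ⟨ht, le_rfl⟩) (hclose.mono fun N hN => ?_)
    refine lyapunovSum_le_gronwallBound hs ht N hy0 hy (hle N 0 ⟨le_rfl, ht⟩) fun x hx => ?_
    have htail : (s ^ (N + 1))⁻¹ * |y x (N + 1)| < ε / s := by
      linarith [hN x hx, hle (N + 1) x hx, lyapunovSum_succ (s := s) (y := y) N x]
    rw [mul_assoc]
    exact ((lt_div_iff₀' hs).1 htail).le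
  have hlim := ((gronwallBound_continuous_ε (Φ 0) (-(s - 1) ^ 2) t).tendsto 0).mono_left
    (nhdsWithin_le_nhds (s := Ioi 0))
  simpa only [gronwallBound_ε0] using ge_of_tendsto hlim (eventually_nhdsWithin_of_forall hε)

end Lyapunov

theorem lyapunov_exponential_decay_general (d : ℕ) (hd : 2 ≤ d) (π₁ : ℝ) (π : ℕ → ℝ)
    (hπ : ∀ i : ℕ, π i = π₁ * ((d : ℝ) ^ i - 1) / ((d : ℝ) - 1))
    (T : ℝ → ℕ → ℝ)
    (hT0 : ∀ t : ℝ, 0 ≤ t → T t 0 = 0)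
    (hderiv : ∀ (i : ℕ) (t : ℝ), 0 ≤ t →
      HasDerivWithinAt (fun s : ℝ => T s (i + 1))
        ((d : ℝ) * T t i - ((d : ℝ) + 1) * T t (i + 1) + T t (i + 2))
        (Set.Ici (0 : ℝ)) t)
    (Φ : ℝ → ℝ)
    (hloc : TendstoLocallyUniformlyOn
      (fun (N : ℕ) (t : ℝ) => ∑ i ∈ Finset.range N,
        (Real.sqrt d ^ (i + 1))⁻¹ * |T t (i + 1) - π (i + 1)|)
      Φ atTop (Set.Ici (0 : ℝ))) :
    ∀ t : ℝ, 0 ≤ t → Φ t ≤ Φ 0 * Real.exp (-(Real.sqrt d - 1) ^ 2 * t) := by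
  intro t ht
  have hd1 : (1 : ℝ) < d := by exact_mod_cast hd
  have hsq : Real.sqrt d ^ 2 = d := Real.sq_sqrt (by positivity)
  have hπ_fixed : ∀ i, (d : ℝ) * π i - ((d : ℝ) + 1) * π (i + 1) + π (i + 2) = 0 := fun i => by
    rw [hπ, hπ, hπ]
    field_simp [sub_ne_zero.2 hd1.ne']
    ring
  refine le_mul_exp_of_tendstoUniformlyOn_lyapunovSum (y := fun x i => T x i - π i)
    (Real.sqrt_pos.2 (by linarith)) ht (fun x hx => by simp [hT0 x hx.1, hπ 0]) (fun i x hx => ?_)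
    ((tendstoLocallyUniformlyOn_iff_tendstoUniformlyOn_of_compact isCompact_Icc).1
      (hloc.mono Icc_subset_Ici_self))
  refine (((hderiv i x hx.1).sub_const (π (i + 1))).mono Icc_subset_Ici_self).congr_deriv ?_
  rw [hsq]
  linear_combination hπ_fixed i

/-- Exponential decay of the Lyapunov function `Φ(t) = Σ_{i≥1} d^{-i/2} |T_i(t) − π_i|`
for the limiting linear system `T_0 ≡ 0`, `T_i' = d·T_{i-1} − (d+1)·T_i + T_{i+1}` (`i ≥ 1`),
where `π_i = π_1 (d^i − 1)/(d−1)` is the fixed point: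
`Φ(t) ≤ Φ(0)·e^{−(√d − 1)² t}` for all `t ≥ 0`. -/
theorem lyapunov_exponential_decay (d : ℕ) (hd : 2 ≤ d) (π₁ : ℝ) (π : ℕ → ℝ)
    (hπ : ∀ i : ℕ, π i = π₁ * ((d : ℝ) ^ i - 1) / ((d : ℝ) - 1))
    (T : ℝ → ℕ → ℝ)
    (hT0 : ∀ t : ℝ, 0 ≤ t → T t 0 = 0)
    (hderiv : ∀ (i : ℕ) (t : ℝ), 0 ≤ t →
      HasDerivWithinAt (fun s : ℝ => T s (i + 1))
        ((d : ℝ) * T t i - ((d : ℝ) + 1) * T t (i + 1) + T t (i + 2))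
        (Set.Ici (0 : ℝ)) t)
    (Φ : ℝ → ℝ)
    (hΦ : ∀ t : ℝ, Φ t = ∑' i : ℕ,
      (Real.sqrt d ^ (i + 1))⁻¹ * |T t (i + 1) - π (i + 1)|)
    (hΦ0 : Summable (fun i : ℕ =>
      (Real.sqrt d ^ (i + 1))⁻¹ * |T 0 (i + 1) - π (i + 1)|))
    (hloc : TendstoLocallyUniformlyOn
      (fun (N : ℕ) (t : ℝ) => ∑ i ∈ Finset.range N,
        (Real.sqrt d ^ (i + 1))⁻¹ * |T t (i + 1) - π (i + 1)|)
      Φ atTop (Set.Ici (0 : ℝ))) :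
    ∀ t : ℝ, 0 ≤ t → Φ t ≤ Φ 0 * Real.exp (-(Real.sqrt d - 1) ^ 2 * t) :=
  lyapunov_exponential_decay_general d hd π₁ π hπ T hT0 hderiv Φ hloc
end

section
/- Let d ≥ 2 be an integer and let ε : ℕ → ℝ satisfy ε_0 = 0, Σ_{i≥1} d^{-i/2}·|ε_i| < ∞, and Σ_{i≥1} d^{-i/2}·(d·|ε_{i-1}| + (d+1)·|ε_i| + |ε_{i+1}|) < ∞. Then, with the convention sgn(0) = 0, Σ_{i≥1} d^{-i/2}·sgn(ε_i)·(d·ε_{i-1} − (d+1)·ε_i + ε_{i+1}) ≤ −(√d − 1)²·Σ_{i≥1} d^{-i/2}·|ε_i|. -/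
/-! Put `r = √d` and `b i = |ε i| / r ^ i`. Since `sgn(y) y = |y|` and `sgn(y) x ≤ |x|`, the
`i`-th term is at most `r b_i − (r² + 1) b_{i+1} + r b_{i+2}`, and at most
`r b_i + (r² + 1) b_{i+1} + r b_{i+2}` in absolute value, so the series converges. As `b 0 = 0`, the three shifted series sum to `(2r − r² − 1) B − r b_1 ≤ −(r − 1)² B`
with `B = Σ_{i ≥ 1} b_i`. -/

lemma Real.sign_mul_sub_add_le {a : ℝ} (ha : 0 ≤ a) (b x y z : ℝ) :
    Real.sign y * (a * x - b * y + z) ≤ a * |x| - b * |y| + |z| := by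
  have hax : a * x ≤ a * |x| := mul_le_mul_of_nonneg_left (le_abs_self x) ha
  have hanx : -(a * x) ≤ a * |x| := by
    rw [← mul_neg]; exact mul_le_mul_of_nonneg_left (neg_le_abs x) ha
  rcases lt_trichotomy y 0 with hy | rfl | hy
  · rw [Real.sign_of_neg hy, abs_of_neg hy]; linarith [neg_le_abs z]
  · rw [Real.sign_zero, abs_zero]; nlinarith [abs_nonneg x, abs_nonneg z]
  · rw [Real.sign_of_pos hy, abs_of_pos hy]; linarith [le_abs_self z]

lemma Real.abs_sign_mul_sub_add_le {a b : ℝ} (ha : 0 ≤ a) (hb : 0 ≤ b) (x y z : ℝ) :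
    |Real.sign y * (a * x - b * y + z)| ≤ a * |x| + b * |y| + |z| := by
  have hsign : |Real.sign y| ≤ 1 := by
    rcases Real.sign_apply_eq y with h | h | h <;> rw [h] <;> norm_num
  calc |Real.sign y * (a * x - b * y + z)|
      ≤ 1 * |a * x - b * y + z| := by rw [abs_mul]; gcongr
    _ ≤ |a * x| + |b * y| + |z| := by
      rw [one_mul]; exact (abs_add_le _ _).trans (by gcongr; exact abs_sub _ _)
    _ = a * |x| + b * |y| + |z| := by rw [abs_mul, abs_mul, abs_of_nonneg ha, abs_of_nonneg hb]

section ShiftedSeries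

variable {b : ℕ → ℝ}

lemma summable_shift_comb (hb : Summable b) (p q s : ℝ) :
    Summable fun i => p * b i + q * b (i + 1) + s * b (i + 2) :=
  ((hb.mul_left p).add (((summable_nat_add_iff 1).2 hb).mul_left q)).add
    (((summable_nat_add_iff 2).2 hb).mul_left s)

lemma tsum_shift_comb_eq (hb : Summable b) (hb0 : b 0 = 0) (p q s : ℝ) :
    ∑' i, (p * b i + q * b (i + 1) + s * b (i + 2)) =
      (p + q + s) * ∑' i, b (i + 1) - s * b 1 := by
  have hb1 : Summable fun i => b (i + 1) := (summable_nat_add_iff 1).2 hb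
  have hb2 : Summable fun i => b (i + 2) := (summable_nat_add_iff 2).2 hb
  have h0 : ∑' i, b i = ∑' i, b (i + 1) := by rw [hb.tsum_eq_zero_add, hb0, zero_add]
  have h2 : ∑' i, b (i + 1) = b 1 + ∑' i, b (i + 2) := hb1.tsum_eq_zero_add
  rw [((hb.mul_left p).add (hb1.mul_left q)).tsum_add (hb2.mul_left s),
    (hb.mul_left p).tsum_add (hb1.mul_left q), tsum_mul_left, tsum_mul_left, tsum_mul_left, h0, h2]
  ring

end ShiftedSeries

theorem tsum_weight_mul_sign_mul_le {r : ℝ} (hr : 0 < r) {ε : ℕ → ℝ} (h0 : ε 0 = 0)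
    (h1 : Summable fun i : ℕ => (r ^ (i + 1))⁻¹ * |ε (i + 1)|) :
    ∑' i : ℕ, (r ^ (i + 1))⁻¹ * Real.sign (ε (i + 1)) *
        (r ^ 2 * ε i - (r ^ 2 + 1) * ε (i + 1) + ε (i + 2)) ≤
      -(r - 1) ^ 2 * ∑' i : ℕ, (r ^ (i + 1))⁻¹ * |ε (i + 1)| := by
  set b : ℕ → ℝ := fun i => (r ^ i)⁻¹ * |ε i|
  have hb : Summable b := (summable_nat_add_iff 1).1 h1
  have hweight : ∀ i (c x y z : ℝ), (r ^ (i + 1))⁻¹ * (r ^ 2 * x + c * y + z) =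
      r * ((r ^ i)⁻¹ * x) + c * ((r ^ (i + 1))⁻¹ * y) + r * ((r ^ (i + 2))⁻¹ * z) := by
    intro i c x y z
    field_simp
    ring
  have hle : ∀ i, (r ^ (i + 1))⁻¹ * Real.sign (ε (i + 1)) *
      (r ^ 2 * ε i - (r ^ 2 + 1) * ε (i + 1) + ε (i + 2)) ≤
      r * b i + -(r ^ 2 + 1) * b (i + 1) + r * b (i + 2) := by
    intro i
    rw [← hweight, mul_assoc, neg_mul, ← sub_eq_add_neg]
    gcongr
    exact Real.sign_mul_sub_add_le (by positivity) _ _ _ _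
  have habs : ∀ i, ‖(r ^ (i + 1))⁻¹ * Real.sign (ε (i + 1)) *
      (r ^ 2 * ε i - (r ^ 2 + 1) * ε (i + 1) + ε (i + 2))‖ ≤
      r * b i + (r ^ 2 + 1) * b (i + 1) + r * b (i + 2) := by
    intro i
    rw [← hweight, Real.norm_eq_abs, mul_assoc, abs_mul, abs_of_pos (by positivity)]
    gcongr
    exact Real.abs_sign_mul_sub_add_le (by positivity) (by positivity) _ _ _
  calc _ ≤ ∑' i, (r * b i + -(r ^ 2 + 1) * b (i + 1) + r * b (i + 2)) :=
        Summable.tsum_le_tsum hle (.of_norm_bounded (summable_shift_comb hb _ _ _) habs)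
          (summable_shift_comb hb _ _ _)
    _ = -(r - 1) ^ 2 * ∑' i, b (i + 1) - r * b 1 := by
      rw [tsum_shift_comb_eq hb (by simp [b, h0])]; ring
    _ ≤ _ := sub_le_self _ (by positivity)

theorem dissipativity_estimate_general (d : ℕ) (hd : 2 ≤ d) (ε : ℕ → ℝ) (h0 : ε 0 = 0)
    (h1 : Summable (fun i : ℕ => (Real.sqrt d ^ (i + 1))⁻¹ * |ε (i + 1)|)) :
    (∑' i : ℕ, (Real.sqrt d ^ (i + 1))⁻¹ * Real.sign (ε (i + 1)) *
        ((d : ℝ) * ε i - ((d : ℝ) + 1) * ε (i + 1) + ε (i + 2))) ≤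
      -(Real.sqrt d - 1) ^ 2 *
        ∑' i : ℕ, (Real.sqrt d ^ (i + 1))⁻¹ * |ε (i + 1)| := by
  have hr : 0 < Real.sqrt d := Real.sqrt_pos.2 (by exact_mod_cast (by omega : 0 < d))
  simpa only [Real.sq_sqrt (Nat.cast_nonneg d)] using tsum_weight_mul_sign_mul_le hr h0 h1

/-- The key dissipativity estimate: if `ε_0 = 0`, `Σ_{i≥1} d^{-i/2}|ε_i| < ∞`, and the
dominating series converges, then (with `sgn 0 = 0`)
`Σ_{i≥1} d^{-i/2}·sgn(ε_i)·(d ε_{i-1} − (d+1) ε_i + ε_{i+1}) ≤ −(√d−1)²·Σ_{i≥1} d^{-i/2}|ε_i|`. -/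
theorem dissipativity_estimate (d : ℕ) (hd : 2 ≤ d) (ε : ℕ → ℝ) (h0 : ε 0 = 0)
    (h1 : Summable (fun i : ℕ => (Real.sqrt d ^ (i + 1))⁻¹ * |ε (i + 1)|))
    (h2 : Summable (fun i : ℕ => (Real.sqrt d ^ (i + 1))⁻¹ *
      ((d : ℝ) * |ε i| + ((d : ℝ) + 1) * |ε (i + 1)| + |ε (i + 2)|))) :
    (∑' i : ℕ, (Real.sqrt d ^ (i + 1))⁻¹ * Real.sign (ε (i + 1)) *
        ((d : ℝ) * ε i - ((d : ℝ) + 1) * ε (i + 1) + ε (i + 2))) ≤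
      -(Real.sqrt d - 1) ^ 2 *
        ∑' i : ℕ, (Real.sqrt d ^ (i + 1))⁻¹ * |ε (i + 1)| :=
  dissipativity_estimate_general d hd ε h0 h1
end

section
/- Let d ≥ 2 be an integer, 0 < λ < 1, and let s : ℕ → ℝ be a nonincreasing sequence with s_0 = 1, s_1 = λ, and s_i − s_{i+1} ≤ λ·d·(s_{i-1} − s_i) for every i ≥ 1. Then for every i ≥ 0: (a) s_i − s_{i+1} ≤ (1 − λ)·(λd)^i ≤ (1 − λ)·d^i; and (b) s_i ≥ 1 − (1 − λ)·(d^i − 1)/(d − 1). -/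
/-- Steady-state lower bound for the supermarket model: if `s` is nonincreasing with
`s_0 = 1`, `s_1 = λ`, and `s_i − s_{i+1} ≤ λd(s_{i-1} − s_i)` for `i ≥ 1`, then for all `i`:
(a) `s_i − s_{i+1} ≤ (1−λ)(λd)^i ≤ (1−λ)d^i`, and
(b) `s_i ≥ 1 − (1−λ)(d^i − 1)/(d−1)`. -/
theorem steady_state_lower_bound (d : ℕ) (hd : 2 ≤ d) (lam : ℝ)
    (hlam0 : 0 < lam) (hlam1 : lam < 1)
    (s : ℕ → ℝ) (hmono : ∀ i : ℕ, s (i + 1) ≤ s i)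
    (h0 : s 0 = 1) (h1 : s 1 = lam)
    (hrec : ∀ i : ℕ, s (i + 1) - s (i + 2) ≤ lam * d * (s i - s (i + 1))) :
    ∀ i : ℕ,
      (s i - s (i + 1) ≤ (1 - lam) * (lam * d) ^ i ∧
        (1 - lam) * (lam * d) ^ i ≤ (1 - lam) * (d : ℝ) ^ i) ∧
      1 - (1 - lam) * ((d : ℝ) ^ i - 1) / ((d : ℝ) - 1) ≤ s i := by
  have hd1 : (1:ℝ) < (d:ℝ) := by exact_mod_cast Nat.lt_of_lt_of_le one_lt_two hd
  have ha : ∀ i, s i - s (i+1) ≤ (1-lam)*(lam*d)^i := by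
    intro i; induction i with
    | zero => simp [h0, h1]
    | succ n ih =>
      calc s (n+1) - s (n+2) ≤ lam*d*(s n - s (n+1)) := hrec n
        _ ≤ lam*d*((1-lam)*(lam*d)^n) := by
            apply mul_le_mul_of_nonneg_left ih; positivity
        _ = (1-lam)*(lam*d)^(n+1) := by ring
  have hld : ∀ i, (lam*(d:ℝ))^i ≤ (d:ℝ)^i := by
    intro i
    apply pow_le_pow_left₀ (by positivity)
    nlinarith
  have h2 : ∀ i, (1-lam)*(lam*(d:ℝ))^i ≤ (1-lam)*(d:ℝ)^i := fun i =>
    mul_le_mul_of_nonneg_left (hld i) (by linarith)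
  have hb : ∀ i, 1 - (1-lam)*((d:ℝ)^i - 1)/((d:ℝ)-1) ≤ s i := by
    intro i; induction i with
    | zero => simp [h0]
    | succ n ih =>
      have h3 : s n - s (n+1) ≤ (1-lam)*(d:ℝ)^n := (ha n).trans (h2 n)
      have key : (1-lam)*((d:ℝ)^(n+1) - 1)/((d:ℝ)-1)
          = (1-lam)*((d:ℝ)^n - 1)/((d:ℝ)-1) + (1-lam)*(d:ℝ)^n := by
        have : (d:ℝ)-1 ≠ 0 := by linarith
        field_simp
        ring
      rw [key]
      linarith
  exact fun i => ⟨⟨ha i, h2 i⟩, hb i⟩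
end

section
/- Let d ≥ 2 be an integer, ρ > 1, η ≥ 1, λ ≥ 0, t > 0, b : ℕ → ℝ, and y : ℕ → ([0,t] → ℝ) a family of bounded measurable functions. Define g^η(x) = (η/d)·(1 − x/η)^d − η/d + x. Suppose T¹ and T² are two families of measurable functions ℕ → ([0,t] → [−η−1, η+1]) each satisfying: T_0 ≡ 0 and, for all i ≥ 1 and s ∈ [0,t], T_i(s) = b_i + y_i(s) − λd·∫_0^s (T_i(u) − T_{i-1}(u) − g^η(T_i(u)) + g^η(T_{i-1}(u))) du + ∫_0^s (T_{i+1}(u) − T_i(u)) du. Then T¹ = T². -/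
/-!
Subtracting the equations of two solutions cancels `b` and `y`, and `g^η`, a polynomial, is
Lipschitz on the compact range `[-η-1, η+1]`. Hence a bound `|T¹ᵢ - T²ᵢ| ≤ c sⁿ` holding for all
`i` at once improves, after one pass through the system, to `K c sⁿ⁺¹ / (n + 1)`. Starting from
the diameter of the range and iterating gives `|T¹ᵢ(s) - T²ᵢ(s)| ≤ B (K s)ⁿ / n!` for every `n`.
-/

open Set Filter MeasureTheory Bornology
open scoped NNReal Nat Topology

noncomputable def gEta (d : ℕ) (η : ℝ) (x : ℝ) : ℝ :=
  η / d * (1 - x / η) ^ d - η / d + x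

theorem eqOn_zero_of_picard_bound {ι : Type*} {D : ι → ℝ → ℝ} {t B K : ℝ} (hB : 0 ≤ B)
    (hD : ∀ i, ∀ s ∈ Icc 0 t, |D i s| ≤ B)
    (hstep : ∀ (n : ℕ) (c : ℝ), 0 ≤ c → (∀ i, ∀ u ∈ Icc 0 t, |D i u| ≤ c * u ^ n) →
      ∀ i, ∀ s ∈ Icc 0 t, |D i s| ≤ K * c * s ^ (n + 1) / (n + 1))
    (i : ι) : EqOn (D i) 0 (Icc 0 t) := by
  have hbound : ∀ n : ℕ, ∀ i, ∀ s ∈ Icc 0 t, |D i s| ≤ B * |K| ^ n / n ! * s ^ n := by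
    intro n
    induction n with
    | zero => simpa using hD
    | succ n ih =>
      intro i s hs
      have hc : 0 ≤ B * |K| ^ n / n ! := by positivity
      calc |D i s| ≤ K * (B * |K| ^ n / n !) * s ^ (n + 1) / (n + 1) := hstep n _ hc ih i s hs
        _ ≤ |K| * (B * |K| ^ n / n !) * s ^ (n + 1) / (n + 1) := by
          have := hs.1
          gcongr
          exact le_abs_self K
        _ = B * |K| ^ (n + 1) / (n + 1)! * s ^ (n + 1) := by
          push_cast [Nat.factorial_succ]
          field_simp
          ring
  intro s hs
  have hlim : Tendsto (fun n : ℕ ↦ B * ((|K| * s) ^ n / n !)) atTop (𝓝 0) := by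
    simpa using (FloorSemiring.tendsto_pow_div_factorial_atTop (|K| * s)).const_mul B
  refine abs_nonpos_iff.mp (ge_of_tendsto' hlim fun n ↦ ?_)
  calc |D i s| ≤ B * |K| ^ n / n ! * s ^ n := hbound n i s hs
    _ = B * ((|K| * s) ^ n / n !) := by ring

theorem abs_intervalIntegral_le_mul_pow_add {f : ℝ → ℝ} {s c A : ℝ} {n : ℕ} (hs : 0 ≤ s)
    (hf : ∀ u ∈ Ioc 0 s, |f u| ≤ c * u ^ n + A) :
    |∫ u in 0..s, f u| ≤ c * s ^ (n + 1) / (n + 1) + A * s := by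
  have hpow : Continuous fun u : ℝ ↦ c * u ^ n := by fun_prop
  have hmajorant : Continuous fun u : ℝ ↦ c * u ^ n + A := by fun_prop
  calc |∫ u in 0..s, f u| ≤ ∫ u in 0..s, (c * u ^ n + A) :=
        intervalIntegral.norm_integral_le_of_norm_le hs
          (ae_of_all _ fun u hu ↦ (Real.norm_eq_abs _).trans_le (hf u hu))
          (hmajorant.intervalIntegrable _ _)
    _ = c * s ^ (n + 1) / (n + 1) + A * s := by
      rw [intervalIntegral.integral_add (hpow.intervalIntegrable _ _) intervalIntegrable_const,
        intervalIntegral.integral_const_mul, integral_pow, intervalIntegral.integral_const,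
        smul_eq_mul]
      ring

theorem intervalIntegrable_of_mapsTo_isBounded {f : ℝ → ℝ} {S : Set ℝ} {a b s : ℝ}
    (hf : Measurable f) (hS : IsBounded S) (hfS : MapsTo f (Icc a b) S) (hs : s ∈ Icc a b) :
    IntervalIntegrable f volume a s := by
  obtain ⟨C, hC⟩ := hS.exists_norm_le
  have hint : IntegrableOn f (Icc a b) :=
    Measure.integrableOn_of_bounded measure_Icc_lt_top.ne hf.aestronglyMeasurable
      ((ae_restrict_iff' measurableSet_Icc).mpr (ae_of_all _ fun u hu ↦ hC _ (hfS hu)))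
  exact (hint.mono_set (uIcc_subset_Icc (left_mem_Icc.mpr (hs.1.trans hs.2)) hs)).intervalIntegrable

theorem abs_sub_sub_sub_add_sub_le_of_lipschitzOnWith {g : ℝ → ℝ} {S : Set ℝ} {L : ℝ≥0}
    (hg : LipschitzOnWith L g S) {a₁ a₀ b₁ b₀ : ℝ} (ha₁ : a₁ ∈ S) (ha₀ : a₀ ∈ S) (hb₁ : b₁ ∈ S)
    (hb₀ : b₀ ∈ S) :
    |(a₁ - a₀ - g a₁ + g a₀) - (b₁ - b₀ - g b₁ + g b₀)| ≤ (1 + L) * (|a₁ - b₁| + |a₀ - b₀|) := by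
  have h₁ : |g a₁ - g b₁| ≤ L * |a₁ - b₁| := hg.dist_le_mul a₁ ha₁ b₁ hb₁
  have h₀ : |g a₀ - g b₀| ≤ L * |a₀ - b₀| := hg.dist_le_mul a₀ ha₀ b₀ hb₀
  calc _ = |(a₁ - b₁) - (a₀ - b₀) - (g a₁ - g b₁) + (g a₀ - g b₀)| := by ring_nf
    _ ≤ |a₁ - b₁| + |a₀ - b₀| + |g a₁ - g b₁| + |g a₀ - g b₀| := by
      grw [abs_add_le, abs_sub _ (g a₁ - g b₁), abs_sub (a₁ - b₁)]
    _ ≤ (1 + L) * (|a₁ - b₁| + |a₀ - b₀|) := by linarith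

structure IsIntegralSystemSolution (g : ℝ → ℝ) (κ : ℝ) (b : ℕ → ℝ) (y : ℕ → ℝ → ℝ) (t : ℝ)
    (S : Set ℝ) (T : ℕ → ℝ → ℝ) : Prop where
  measurable : ∀ i, Measurable (T i)
  mapsTo : ∀ i, MapsTo (T i) (Icc 0 t) S
  zero : ∀ s ∈ Icc 0 t, T 0 s = 0
  /-- The second integral lies inside the first integrand (this is how
  `∫ u in 0..s, A u + ∫ u in 0..s, B u` parses); being constant in `u`, it enters multiplied
  by `s`. -/
  succ : ∀ i, ∀ s ∈ Icc 0 t, T (i + 1) s = b (i + 1) + y (i + 1) s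
    - κ * ∫ u in 0..s, (T (i + 1) u - T i u - g (T (i + 1) u) + g (T i u)
      + ∫ w in 0..s, (T (i + 2) w - T (i + 1) w))

namespace IsIntegralSystemSolution

variable {g : ℝ → ℝ} {κ : ℝ} {b : ℕ → ℝ} {y : ℕ → ℝ → ℝ} {t : ℝ} {S : Set ℝ}
  {T T₁ T₂ : ℕ → ℝ → ℝ}

theorem intervalIntegrable (hT : IsIntegralSystemSolution g κ b y t S T) (hS : IsBounded S)
    (i : ℕ) {s : ℝ} (hs : s ∈ Icc 0 t) : IntervalIntegrable (T i) volume 0 s :=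
  intervalIntegrable_of_mapsTo_isBounded (hT.measurable i) hS (hT.mapsTo i) hs

theorem intervalIntegrable_comp (hT : IsIntegralSystemSolution g κ b y t S T) (hS : IsCompact S)
    {f : ℝ → ℝ} (hf : Continuous f) (i : ℕ) {s : ℝ} (hs : s ∈ Icc 0 t) :
    IntervalIntegrable (fun u ↦ f (T i u)) volume 0 s :=
  intervalIntegrable_of_mapsTo_isBounded (hf.measurable.comp (hT.measurable i))
    (hS.image hf).isBounded ((mapsTo_image f S).comp (hT.mapsTo i)) hs

theorem sub_eq (h₁ : IsIntegralSystemSolution g κ b y t S T₁)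
    (h₂ : IsIntegralSystemSolution g κ b y t S T₂) (hg : Continuous g) (hS : IsCompact S) (i : ℕ)
    {s : ℝ} (hs : s ∈ Icc 0 t) :
    T₁ (i + 1) s - T₂ (i + 1) s = -κ * ∫ u in 0..s,
      ((T₁ (i + 1) u - T₁ i u - g (T₁ (i + 1) u) + g (T₁ i u)
        + ∫ w in 0..s, (T₁ (i + 2) w - T₁ (i + 1) w))
      - (T₂ (i + 1) u - T₂ i u - g (T₂ (i + 1) u) + g (T₂ i u)
        + ∫ w in 0..s, (T₂ (i + 2) w - T₂ (i + 1) w))) := by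
  have hint : ∀ T, IsIntegralSystemSolution g κ b y t S T → IntervalIntegrable
      (fun u ↦ T (i + 1) u - T i u - g (T (i + 1) u) + g (T i u)
        + ∫ w in 0..s, (T (i + 2) w - T (i + 1) w)) volume 0 s := fun T hT ↦
    ((((hT.intervalIntegrable hS.isBounded (i + 1) hs).sub
      (hT.intervalIntegrable hS.isBounded i hs)).sub
      (hT.intervalIntegrable_comp hS hg (i + 1) hs)).add
      (hT.intervalIntegrable_comp hS hg i hs)).add intervalIntegrable_const
  rw [intervalIntegral.integral_sub (hint T₁ h₁) (hint T₂ h₂), h₁.succ i s hs, h₂.succ i s hs]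
  ring

theorem abs_sub_le_of_abs_sub_le_mul_pow (h₁ : IsIntegralSystemSolution g κ b y t S T₁)
    (h₂ : IsIntegralSystemSolution g κ b y t S T₂) (hg : Continuous g) {L : ℝ≥0}
    (hgL : LipschitzOnWith L g S) (hS : IsCompact S) {n : ℕ} {c : ℝ} (hc : 0 ≤ c)
    (hΔ : ∀ i, ∀ u ∈ Icc 0 t, |T₁ i u - T₂ i u| ≤ c * u ^ n) (i : ℕ) {s : ℝ} (hs : s ∈ Icc 0 t) :
    |T₁ i s - T₂ i s| ≤ |κ| * (2 * (1 + L) + 2 * t) * c * s ^ (n + 1) / (n + 1) := by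
  have hs₀ := hs.1
  have ht₀ := hs.1.trans hs.2
  cases i with
  | zero =>
    rw [h₁.zero s hs, h₂.zero s hs, sub_zero, abs_zero]
    positivity
  | succ j =>
    have hIoc : ∀ {u}, u ∈ Ioc 0 s → u ∈ Icc 0 t := fun hu ↦ ⟨hu.1.le, hu.2.trans hs.2⟩
    set A := 2 * c * s ^ (n + 1) / (n + 1)
    have hflux : |(∫ w in 0..s, (T₁ (j + 2) w - T₁ (j + 1) w))
        - ∫ w in 0..s, (T₂ (j + 2) w - T₂ (j + 1) w)| ≤ A := by
      rw [← intervalIntegral.integral_sub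
        ((h₁.intervalIntegrable hS.isBounded _ hs).sub (h₁.intervalIntegrable hS.isBounded _ hs))
        ((h₂.intervalIntegrable hS.isBounded _ hs).sub (h₂.intervalIntegrable hS.isBounded _ hs))]
      simpa using abs_intervalIntegral_le_mul_pow_add (c := 2 * c) (A := 0) hs₀ fun u hu ↦
        calc _ = |(T₁ (j + 2) u - T₂ (j + 2) u) - (T₁ (j + 1) u - T₂ (j + 1) u)| := by ring_nf
          _ ≤ c * u ^ n + c * u ^ n := by
            grw [abs_sub, hΔ _ u (hIoc hu), hΔ _ u (hIoc hu)]
          _ = 2 * c * u ^ n + 0 := by ring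
    have hintegrand : ∀ u ∈ Ioc 0 s,
        |(T₁ (j + 1) u - T₁ j u - g (T₁ (j + 1) u) + g (T₁ j u)
          + ∫ w in 0..s, (T₁ (j + 2) w - T₁ (j + 1) w))
        - (T₂ (j + 1) u - T₂ j u - g (T₂ (j + 1) u) + g (T₂ j u)
          + ∫ w in 0..s, (T₂ (j + 2) w - T₂ (j + 1) w))| ≤ 2 * (1 + L) * c * u ^ n + A := by
      intro u hu
      have hu' := hIoc hu
      rw [add_sub_add_comm]
      grw [abs_add_le, abs_sub_sub_sub_add_sub_le_of_lipschitzOnWith hgL (h₁.mapsTo _ hu')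
        (h₁.mapsTo _ hu') (h₂.mapsTo _ hu') (h₂.mapsTo _ hu'), hΔ _ u hu', hΔ _ u hu', hflux]
      exact le_of_eq (by ring)
    rw [h₁.sub_eq h₂ hg hS j hs, abs_mul, abs_neg]
    calc _ ≤ |κ| * (2 * (1 + L) * c * s ^ (n + 1) / (n + 1) + A * s) := by
          gcongr
          exact abs_intervalIntegral_le_mul_pow_add hs₀ hintegrand
      _ ≤ |κ| * (2 * (1 + L) * c * s ^ (n + 1) / (n + 1) + A * t) := by
          gcongr
          exact hs.2
      _ = _ := by ring

theorem eqOn (h₁ : IsIntegralSystemSolution g κ b y t S T₁)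
    (h₂ : IsIntegralSystemSolution g κ b y t S T₂) (hg : Continuous g) {L : ℝ≥0}
    (hgL : LipschitzOnWith L g S) (hS : IsCompact S) (i : ℕ) :
    EqOn (T₁ i) (T₂ i) (Icc 0 t) := fun _ hs ↦
  sub_eq_zero.mp <| eqOn_zero_of_picard_bound (D := fun i s ↦ T₁ i s - T₂ i s)
    Metric.diam_nonneg
    (fun i _ hs ↦ Metric.dist_le_diam_of_mem hS.isBounded (h₁.mapsTo i hs) (h₂.mapsTo i hs))
    (fun _ _ hc hΔ ↦ h₁.abs_sub_le_of_abs_sub_le_mul_pow h₂ hg hgL hS hc hΔ) i hs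

end IsIntegralSystemSolution

theorem contDiff_gEta (d : ℕ) (η : ℝ) : ContDiff ℝ ⊤ (gEta d η) := by
  unfold gEta
  fun_prop

theorem integral_system_uniqueness_general (d : ℕ) (η lam t : ℝ)
    (b : ℕ → ℝ) (y : ℕ → ℝ → ℝ)
    (T₁ T₂ : ℕ → ℝ → ℝ)
    (hmeas₁ : ∀ i : ℕ, Measurable (T₁ i)) (hmeas₂ : ∀ i : ℕ, Measurable (T₂ i))
    (hbdd₁ : ∀ i : ℕ, ∀ s ∈ Set.Icc (0 : ℝ) t, T₁ i s ∈ Set.Icc (-η - 1) (η + 1))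
    (hbdd₂ : ∀ i : ℕ, ∀ s ∈ Set.Icc (0 : ℝ) t, T₂ i s ∈ Set.Icc (-η - 1) (η + 1))
    (h0₁ : ∀ s ∈ Set.Icc (0 : ℝ) t, T₁ 0 s = 0)
    (h0₂ : ∀ s ∈ Set.Icc (0 : ℝ) t, T₂ 0 s = 0)
    (heq₁ : ∀ i : ℕ, ∀ s ∈ Set.Icc (0 : ℝ) t,
      T₁ (i + 1) s = b (i + 1) + y (i + 1) s
        - lam * d * ∫ u in (0 : ℝ)..s,
            (T₁ (i + 1) u - T₁ i u - gEta d η (T₁ (i + 1) u) + gEta d η (T₁ i u))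
        + ∫ u in (0 : ℝ)..s, (T₁ (i + 2) u - T₁ (i + 1) u))
    (heq₂ : ∀ i : ℕ, ∀ s ∈ Set.Icc (0 : ℝ) t,
      T₂ (i + 1) s = b (i + 1) + y (i + 1) s
        - lam * d * ∫ u in (0 : ℝ)..s,
            (T₂ (i + 1) u - T₂ i u - gEta d η (T₂ (i + 1) u) + gEta d η (T₂ i u))
        + ∫ u in (0 : ℝ)..s, (T₂ (i + 2) u - T₂ (i + 1) u)) :
    ∀ i : ℕ, Set.EqOn (T₁ i) (T₂ i) (Set.Icc 0 t) := by
  have hS : IsCompact (Icc (-η - 1) (η + 1)) := isCompact_Icc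
  obtain ⟨L, hL⟩ := (contDiff_gEta d η).contDiffOn.exists_lipschitzOnWith WithTop.top_ne_zero
    (convex_Icc _ _) hS
  have h₁ : IsIntegralSystemSolution (gEta d η) (lam * d) b y t _ T₁ :=
    ⟨hmeas₁, hbdd₁, h0₁, heq₁⟩
  have h₂ : IsIntegralSystemSolution (gEta d η) (lam * d) b y t _ T₂ :=
    ⟨hmeas₂, hbdd₂, h0₂, heq₂⟩
  exact h₁.eqOn h₂ (contDiff_gEta d η).continuous hL hS

/-- Uniqueness for the integral system: any two measurable families with values in
`[−η−1, η+1]` satisfying `T_0 ≡ 0` and, for `i ≥ 1`,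
`T_i(s) = b_i + y_i(s) − λd ∫_0^s (T_i − T_{i-1} − g^η(T_i) + g^η(T_{i-1})) du
+ ∫_0^s (T_{i+1} − T_i) du` on `[0,t]` must coincide on `[0,t]`. -/
theorem integral_system_uniqueness (d : ℕ) (hd : 2 ≤ d) (ρ η lam t : ℝ)
    (hρ : 1 < ρ) (hη : 1 ≤ η) (hlam : 0 ≤ lam) (ht : 0 < t)
    (b : ℕ → ℝ) (y : ℕ → ℝ → ℝ)
    (hymeas : ∀ i : ℕ, Measurable (y i))
    (hybdd : ∀ i : ℕ, ∃ C : ℝ, ∀ s ∈ Set.Icc (0 : ℝ) t, |y i s| ≤ C)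
    (T₁ T₂ : ℕ → ℝ → ℝ)
    (hmeas₁ : ∀ i : ℕ, Measurable (T₁ i)) (hmeas₂ : ∀ i : ℕ, Measurable (T₂ i))
    (hbdd₁ : ∀ i : ℕ, ∀ s ∈ Set.Icc (0 : ℝ) t, T₁ i s ∈ Set.Icc (-η - 1) (η + 1))
    (hbdd₂ : ∀ i : ℕ, ∀ s ∈ Set.Icc (0 : ℝ) t, T₂ i s ∈ Set.Icc (-η - 1) (η + 1))
    (h0₁ : ∀ s ∈ Set.Icc (0 : ℝ) t, T₁ 0 s = 0)
    (h0₂ : ∀ s ∈ Set.Icc (0 : ℝ) t, T₂ 0 s = 0)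
    (heq₁ : ∀ i : ℕ, ∀ s ∈ Set.Icc (0 : ℝ) t,
      T₁ (i + 1) s = b (i + 1) + y (i + 1) s
        - lam * d * ∫ u in (0 : ℝ)..s,
            (T₁ (i + 1) u - T₁ i u - gEta d η (T₁ (i + 1) u) + gEta d η (T₁ i u))
        + ∫ u in (0 : ℝ)..s, (T₁ (i + 2) u - T₁ (i + 1) u))
    (heq₂ : ∀ i : ℕ, ∀ s ∈ Set.Icc (0 : ℝ) t,
      T₂ (i + 1) s = b (i + 1) + y (i + 1) s
        - lam * d * ∫ u in (0 : ℝ)..s,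
            (T₂ (i + 1) u - T₂ i u - gEta d η (T₂ (i + 1) u) + gEta d η (T₂ i u))
        + ∫ u in (0 : ℝ)..s, (T₂ (i + 2) u - T₂ (i + 1) u)) :
    ∀ i : ℕ, Set.EqOn (T₁ i) (T₂ i) (Set.Icc 0 t) :=
  integral_system_uniqueness_general d η lam t b y T₁ T₂ hmeas₁ hmeas₂ hbdd₁ hbdd₂ h0₁ h0₂ heq₁ heq₂
end

section
/- Let γ > 1 and t > 0. Let a : ℕ → [0,∞) with A := Σ_{i≥1} γ^{-i}·a_i < ∞, and let u_i : [0,t] → [0,∞), i ≥ 1, be nondecreasing functions such that u_i(s) ≤ a_i + ∫_0^s u_{i+1}(r) dr for every i ≥ 1 and s ∈ [0,t], and such that U(s) := Σ_{i≥1} γ^{-i}·u_i(s) is finite for every s ∈ [0,t]. Then U(t) ≤ A·e^{γ·t}. -/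
/-!
Iterating `u i s ≤ a i + ∫₀ˢ u (i + 1)` n times bounds `u i t` by the Taylor-type polynomial
`∑_{k<n} a (i + k) t^k / k!` plus the remainder `u (i + n) t · t^n / n!`. In the weighted sum a
shift of the index by `k` costs at most a factor `γ^k`, so
`U(t) ≤ A · ∑_{k<n} (γt)^k / k! + (γt)^n / n! · U(t) ≤ A e^{γt} + (γt)^n / n! · U(t)`, and the last
term tends to `0` because `U(t)` is finite.
-/

open Set Finset Filter MeasureTheory
open scoped Nat

theorem integral_pow_div_factorial (k : ℕ) (s : ℝ) :
    ∫ r in (0 : ℝ)..s, r ^ k / k ! = s ^ (k + 1) / (k + 1)! := by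
  rw [intervalIntegral.integral_div, integral_pow, Nat.factorial_succ]
  push_cast
  field_simp
  ring

theorem integral_sum_mul_pow_div_factorial (a : ℕ → ℝ) (n : ℕ) (s : ℝ) :
    ∫ r in (0 : ℝ)..s, ∑ k ∈ range n, a k * (r ^ k / k !) =
      ∑ k ∈ range n, a k * (s ^ (k + 1) / (k + 1)!) := by
  rw [intervalIntegral.integral_finsetSum fun k _ =>
    (by fun_prop : Continuous _).intervalIntegrable _ _]
  simp only [intervalIntegral.integral_const_mul, integral_pow_div_factorial]

theorem le_taylor_of_le_integral {u : ℕ → ℝ → ℝ} {a : ℕ → ℝ} {t : ℝ}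
    (hmono : ∀ i, MonotoneOn (u i) (Icc 0 t))
    (hineq : ∀ i, ∀ s ∈ Icc 0 t, u i s ≤ a i + ∫ r in (0 : ℝ)..s, u (i + 1) r) (n : ℕ) :
    ∀ i, ∀ s ∈ Icc 0 t,
      u i s ≤ ∑ k ∈ range n, a (i + k) * (s ^ k / k !) + u (i + n) t * (s ^ n / n !) := by
  induction n with
  | zero =>
    intro i s hs
    simpa using hmono i hs ⟨hs.1.trans hs.2, le_rfl⟩ hs.2
  | succ n ih =>
    intro i s hs
    have hsub : Icc 0 s ⊆ Icc 0 t := Icc_subset_Icc_right hs.2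
    have hint_u : IntervalIntegrable (u (i + 1)) volume 0 s :=
      ((hmono (i + 1)).mono (uIcc_of_le hs.1 ▸ hsub)).intervalIntegrable
    have hint_sum : IntervalIntegrable (fun r => ∑ k ∈ range n, a (i + 1 + k) * (r ^ k / k !))
        volume 0 s := (by fun_prop : Continuous _).intervalIntegrable _ _
    have hint_rem : IntervalIntegrable (fun r => u (i + 1 + n) t * (r ^ n / n !))
        volume 0 s := (by fun_prop : Continuous _).intervalIntegrable _ _
    calc u i s ≤ a i + ∫ r in (0 : ℝ)..s, u (i + 1) r := hineq i s hs
      _ ≤ a i + ∫ r in (0 : ℝ)..s,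
            (∑ k ∈ range n, a (i + 1 + k) * (r ^ k / k !) + u (i + 1 + n) t * (r ^ n / n !)) := by
          gcongr
          exact intervalIntegral.integral_mono_on hs.1 hint_u (hint_sum.add hint_rem)
            fun r hr => ih (i + 1) r (hsub hr)
      _ = _ := by
          rw [intervalIntegral.integral_add hint_sum hint_rem, integral_sum_mul_pow_div_factorial,
            intervalIntegral.integral_const_mul, integral_pow_div_factorial,
            sum_range_succ' _ n]
          simp only [add_assoc, add_comm 1, add_zero, pow_zero, Nat.factorial_zero, Nat.cast_one,
            div_one, mul_one]
          ring

section Weighted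

variable {γ : ℝ}

theorem zpow_neg_succ_eq_pow_mul (hγ : γ ≠ 0) (k i : ℕ) :
    γ ^ (-((i : ℤ) + 1)) = γ ^ k * γ ^ (-(((i + k : ℕ) : ℤ) + 1)) := by
  rw [← zpow_natCast, ← zpow_add₀ hγ]
  push_cast
  ring_nf

theorem summable_weighted_nat_add {f : ℕ → ℝ} (hγ : γ ≠ 0)
    (hf : Summable fun i : ℕ => γ ^ (-((i : ℤ) + 1)) * f i) (k : ℕ) :
    Summable fun i : ℕ => γ ^ (-((i : ℤ) + 1)) * f (i + k) :=
  (((summable_nat_add_iff k).2 hf).mul_left (γ ^ k)).congr fun i => by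
    rw [← mul_assoc, ← zpow_neg_succ_eq_pow_mul hγ]

theorem tsum_weighted_nat_add_le {f : ℕ → ℝ} (hγ : 0 < γ) (hf₀ : ∀ i, 0 ≤ f i)
    (hf : Summable fun i : ℕ => γ ^ (-((i : ℤ) + 1)) * f i) (k : ℕ) :
    ∑' i : ℕ, γ ^ (-((i : ℤ) + 1)) * f (i + k) ≤
      γ ^ k * ∑' i : ℕ, γ ^ (-((i : ℤ) + 1)) * f i := by
  have hshift : ∑' i : ℕ, γ ^ (-((i : ℤ) + 1)) * f (i + k) =
      γ ^ k * ∑' i : ℕ, γ ^ (-(((i + k : ℕ) : ℤ) + 1)) * f (i + k) := by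
    rw [← tsum_mul_left]
    exact tsum_congr fun i => by rw [← mul_assoc, ← zpow_neg_succ_eq_pow_mul hγ.ne']
  rw [hshift]
  exact mul_le_mul_of_nonneg_left (tsum_comp_le_tsum_of_inj hf
    (fun i => mul_nonneg (by positivity) (hf₀ i)) (add_left_injective k)) (by positivity)

theorem tsum_weighted_le_of_taylor_bound {c : ℝ} (hγ : 0 < γ) (hc : 0 ≤ c) {a x : ℕ → ℝ}
    (ha₀ : ∀ i, 0 ≤ a i) (hx₀ : ∀ i, 0 ≤ x i)
    (ha : Summable fun i : ℕ => γ ^ (-((i : ℤ) + 1)) * a i)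
    (hx : Summable fun i : ℕ => γ ^ (-((i : ℤ) + 1)) * x i) (n : ℕ)
    (hbound : ∀ i, x i ≤ ∑ k ∈ range n, a (i + k) * (c ^ k / k !) + x (i + n) * (c ^ n / n !)) :
    ∑' i : ℕ, γ ^ (-((i : ℤ) + 1)) * x i ≤
      (∑' i : ℕ, γ ^ (-((i : ℤ) + 1)) * a i) * Real.exp (γ * c) +
        (γ * c) ^ n / n ! * ∑' i : ℕ, γ ^ (-((i : ℤ) + 1)) * x i := by
  set w : ℕ → ℝ := fun i => γ ^ (-((i : ℤ) + 1))
  set A := ∑' i, w i * a i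
  set X := ∑' i, w i * x i
  have hsum_a : ∀ k ∈ range n, Summable fun i => w i * a (i + k) * (c ^ k / k !) :=
    fun k _ => (summable_weighted_nat_add hγ.ne' ha k).mul_right _
  have hsum_x : Summable fun i => w i * x (i + n) * (c ^ n / n !) :=
    (summable_weighted_nat_add hγ.ne' hx n).mul_right _
  calc X ≤ ∑' i, (∑ k ∈ range n, w i * a (i + k) * (c ^ k / k !) +
          w i * x (i + n) * (c ^ n / n !)) := by
        refine hx.tsum_le_tsum (fun i => ?_) ((summable_sum hsum_a).add hsum_x)
        simp only [mul_assoc, ← mul_sum, ← mul_add]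
        exact mul_le_mul_of_nonneg_left (hbound i) (by positivity)
    _ = ∑ k ∈ range n, (∑' i, w i * a (i + k)) * (c ^ k / k !) +
          (∑' i, w i * x (i + n)) * (c ^ n / n !) := by
        rw [(summable_sum hsum_a).tsum_add hsum_x, Summable.tsum_finsetSum hsum_a]
        simp only [tsum_mul_right]
    _ ≤ ∑ k ∈ range n, γ ^ k * A * (c ^ k / k !) + γ ^ n * X * (c ^ n / n !) := by
        gcongr with k
        · exact tsum_weighted_nat_add_le hγ ha₀ ha k
        · exact tsum_weighted_nat_add_le hγ hx₀ hx n
    _ = A * ∑ k ∈ range n, (γ * c) ^ k / k ! + (γ * c) ^ n / n ! * X := by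
        simp only [mul_sum, mul_pow]
        congr 1
        · exact sum_congr rfl fun k _ => by ring
        · ring
    _ ≤ A * Real.exp (γ * c) + (γ * c) ^ n / n ! * X := by
        gcongr
        · exact tsum_nonneg fun i => mul_nonneg (by positivity) (ha₀ i)
        · exact Real.sum_le_exp_of_nonneg (by positivity) n

end Weighted

/-- Weighted Gronwall-type estimate: if `u_i : [0,t] → [0,∞)` (`i ≥ 1`) are nondecreasing
with `u_i(s) ≤ a_i + ∫_0^s u_{i+1}(r) dr`, `A = Σ_{i≥1} γ^{-i} a_i < ∞`, and
`U(s) = Σ_{i≥1} γ^{-i} u_i(s)` is finite for every `s ∈ [0,t]`, then `U(t) ≤ A·e^{γt}`. -/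
theorem weighted_gronwall (γ t : ℝ) (hγ : 1 < γ) (ht : 0 < t)
    (a : ℕ → ℝ) (ha : ∀ i : ℕ, 1 ≤ i → 0 ≤ a i)
    (u : ℕ → ℝ → ℝ)
    (hpos : ∀ i : ℕ, 1 ≤ i → ∀ s ∈ Set.Icc (0 : ℝ) t, 0 ≤ u i s)
    (hmono : ∀ i : ℕ, 1 ≤ i → MonotoneOn (u i) (Set.Icc (0 : ℝ) t))
    (hineq : ∀ i : ℕ, 1 ≤ i → ∀ s ∈ Set.Icc (0 : ℝ) t,
      u i s ≤ a i + ∫ r in (0 : ℝ)..s, u (i + 1) r)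
    (hA : Summable (fun i : ℕ => γ ^ (-((i : ℤ) + 1)) * a (i + 1)))
    (hU : ∀ s ∈ Set.Icc (0 : ℝ) t,
      Summable (fun i : ℕ => γ ^ (-((i : ℤ) + 1)) * u (i + 1) s)) :
    (∑' i : ℕ, γ ^ (-((i : ℤ) + 1)) * u (i + 1) t) ≤
      (∑' i : ℕ, γ ^ (-((i : ℤ) + 1)) * a (i + 1)) * Real.exp (γ * t) := by
  have ht_mem : t ∈ Icc 0 t := ⟨ht.le, le_rfl⟩
  have hbound (n i : ℕ) := le_taylor_of_le_integral (u := fun i => u (i + 1))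
    (a := fun i => a (i + 1)) (fun i => hmono (i + 1) i.succ_pos)
    (fun i => hineq (i + 1) i.succ_pos) n i t ht_mem
  have hstep (n : ℕ) := tsum_weighted_le_of_taylor_bound (zero_lt_one.trans hγ) ht.le
    (fun i => ha (i + 1) i.succ_pos) (fun i => hpos (i + 1) i.succ_pos t ht_mem) hA (hU t ht_mem)
    n (hbound n)
  have hremainder := (FloorSemiring.tendsto_pow_div_factorial_atTop (γ * t)).mul_const
    (∑' i : ℕ, γ ^ (-((i : ℤ) + 1)) * u (i + 1) t)
  refine ge_of_tendsto' (x := atTop) ?_ hstep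
  simpa using tendsto_const_nhds.add hremainder
end
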